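/- arXiv:0906.0620 — 2 statements merged into one kernel-verified Lean document; each statement's English description precedes it below -/
import Mathlib

section
/- Let (G,q) be a pre-metric group and let H ⊆ G be a Lagrangian subgroup. Then τ⁺(G,q) = |H| and τ⁻(G,q) = |H| (the order |H| regarded as an element of k). -/
/-- The bicharacter associated with a `kˣ`-valued function `q` on `G`:
`b(g,h) = q(g+h) · q(g)⁻¹ · q(h)⁻¹`. -/
def bchar {k : Type*} [Field k] {G : Type*} [AddCommGroup G] (q : G → kˣ) (g h : G) : kˣ :=
  q (g + h) * (q g)⁻¹ * (q h)⁻¹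

/-- `q : G → kˣ` is a quadratic form: `q (-g) = q g` for all `g`, and the associated
function `bchar q` is bimultiplicative. -/
structure IsQuadForm {k : Type*} [Field k] {G : Type*} [AddCommGroup G] (q : G → kˣ) : Prop where
  map_neg : ∀ g : G, q (-g) = q g
  bchar_add_left : ∀ g₁ g₂ h : G, bchar q (g₁ + g₂) h = bchar q g₁ h * bchar q g₂ h
  bchar_add_right : ∀ g h₁ h₂ : G, bchar q g (h₁ + h₂) = bchar q g h₁ * bchar q g h₂

/-- The Gauss sum `τ⁺(G,q) = ∑_{g ∈ G} q(g)`, as an element of `k`. -/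
noncomputable def tauPlus {k : Type*} [Field k] {G : Type*} [AddCommGroup G] (q : G → kˣ) : k :=
  ∑ᶠ g : G, (q g : k)

/-- The Gauss sum `τ⁻(G,q) = ∑_{g ∈ G} q(g)⁻¹`, as an element of `k`. -/
noncomputable def tauMinus {k : Type*} [Field k] {G : Type*} [AddCommGroup G] (q : G → kˣ) : k :=
  ∑ᶠ g : G, (((q g)⁻¹ : kˣ) : k)

/-- Non-degeneracy of (the bicharacter associated with) `q` : the map
`g ↦ b(g, ·)` from `G` to `Hom(G, kˣ)` is injective. -/
def Nondeg {k : Type*} [Field k] {G : Type*} [AddCommGroup G] (q : G → kˣ) : Prop :=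
  Function.Injective fun g : G => fun h : G => bchar q g h

/-- Isomorphism of pre-metric groups: a group isomorphism `φ : G₁ ≃ G₂`
with `q₂ ∘ φ = q₁`. -/
def PMIso {k : Type*} [Field k] {G₁ : Type*} [AddCommGroup G₁] {G₂ : Type*} [AddCommGroup G₂]
    (q₁ : G₁ → kˣ) (q₂ : G₂ → kˣ) : Prop :=
  ∃ φ : G₁ ≃+ G₂, ∀ g : G₁, q₂ (φ g) = q₁ g

/-!
Summing `q (g + h)` over `g ∈ G` and `h ∈ H` in two ways: for each fixed `h` the sum over `g`
is `τ⁺(G,q)`. For fixed `g`, isotropy of `H` gives `q (g + h) = q g · b(g,h)`, and the sum of the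
character `b(g,·)` over `H` is `|H|` if `g ∈ H⊥ = H` and `0` otherwise, so the double sum is
`|H|²`. Hence `|H| · τ⁺ = |H|²`. Finally `τ⁻(G,q) = τ⁺(G,q⁻¹)`, and `H` is Lagrangian for `q⁻¹` too.
-/

open Finset

section

variable {k G : Type*} [Field k] [AddCommGroup G]

lemma bchar_inv (q : G → kˣ) (g h : G) :
    bchar (fun x => (q x)⁻¹) g h = (bchar q g h)⁻¹ := by
  simp only [bchar, mul_inv, inv_inv]

namespace IsQuadForm

variable {q : G → kˣ}

lemma inv (hq : IsQuadForm q) : IsQuadForm fun g => (q g)⁻¹ where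
  map_neg g := by rw [hq.map_neg]
  bchar_add_left g₁ g₂ h := by simp only [bchar_inv, hq.bchar_add_left, mul_inv]
  bchar_add_right g h₁ h₂ := by simp only [bchar_inv, hq.bchar_add_right, mul_inv]

lemma bchar_zero_right (hq : IsQuadForm q) (g : G) : bchar q g 0 = 1 := by
  simpa using hq.bchar_add_right g 0 0

def bcharAddChar (hq : IsQuadForm q) (g : G) : AddChar G k where
  toFun h := bchar q g h
  map_zero_eq_one' := by simp [hq.bchar_zero_right]
  map_add_eq_mul' h₁ h₂ := by simp [hq.bchar_add_right]

lemma sum_bchar_addSubgroup (hq : IsQuadForm q) (H : AddSubgroup G) [Fintype H] (g : G)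
    [Decidable (∀ h ∈ H, bchar q g h = 1)] :
    ∑ h : H, (bchar q g h : k) = if ∀ h ∈ H, bchar q g h = 1 then (Fintype.card H : k) else 0 := by
  classical
  convert AddChar.sum_eq_ite ((hq.bcharAddChar g).compAddMonoidHom H.subtype) using 2
  · rfl
  · rw [AddChar.eq_zero_iff, Subtype.forall]
    simp [bcharAddChar]

end IsQuadForm

lemma sum_add_of_isotropic (q : G → kˣ) {H : AddSubgroup G} [Fintype H]
    (hiso : ∀ h ∈ H, q h = 1) (g : G) :
    ∑ h : H, (q (g + h) : k) = q g * ∑ h : H, (bchar q g h : k) := by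
  rw [mul_sum]
  refine sum_congr rfl fun h _ => ?_
  rw [← Units.val_mul, bchar, hiso h h.2, inv_one, mul_one, mul_inv_cancel_comm_assoc]

lemma sum_addSubgroup_of_lagrangian {q : G → kˣ} (hq : IsQuadForm q)
    {H : AddSubgroup G} [Fintype H] (hiso : ∀ h ∈ H, q h = 1)
    (hlag : ∀ g : G, g ∈ H ↔ ∀ h ∈ H, bchar q g h = 1) (g : G) [Decidable (g ∈ H)] :
    ∑ h : H, (q (g + h) : k) = if g ∈ H then (Fintype.card H : k) else 0 := by
  classical
  rw [sum_add_of_isotropic q hiso, hq.sum_bchar_addSubgroup H g]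
  simp only [← hlag g]
  split_ifs with hg
  · simp [hiso g hg]
  · simp

lemma card_mul_tauPlus_of_lagrangian [Finite G] {q : G → kˣ} (hq : IsQuadForm q)
    {H : AddSubgroup G} (hiso : ∀ h ∈ H, q h = 1)
    (hlag : ∀ g : G, g ∈ H ↔ ∀ h ∈ H, bchar q g h = 1) :
    Nat.card H * tauPlus q = Nat.card H * Nat.card H := by
  classical
  have := Fintype.ofFinite G
  calc (Nat.card H : k) * tauPlus q = ∑ h : H, ∑ g : G, (q (g + h) : k) := by
        simp only [tauPlus, finsum_eq_sum_of_fintype, Nat.card_eq_fintype_card, ← nsmul_eq_mul,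
          ← card_univ, ← sum_const]
        exact sum_congr rfl fun h _ =>
          (Fintype.sum_equiv (Equiv.addRight (h : G)) _ _ fun _ => rfl).symm
    _ = ∑ g : G, if g ∈ H then (Nat.card H : k) else 0 := by
        rw [sum_comm]
        simp only [sum_addSubgroup_of_lagrangian hq hiso hlag, Nat.card_eq_fintype_card]
    _ = Nat.card H * Nat.card H := by
        rw [sum_ite, sum_const_zero, add_zero, sum_const, nsmul_eq_mul, ← Fintype.card_subtype,
          Nat.card_eq_fintype_card]

theorem tauPlus_of_lagrangian [CharZero k] [Finite G] {q : G → kˣ} (hq : IsQuadForm q)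
    {H : AddSubgroup G} (hiso : ∀ h ∈ H, q h = 1)
    (hlag : ∀ g : G, g ∈ H ↔ ∀ h ∈ H, bchar q g h = 1) :
    tauPlus q = Nat.card H :=
  mul_left_cancel₀ (Nat.cast_ne_zero.mpr Nat.card_pos.ne')
    (card_mul_tauPlus_of_lagrangian hq hiso hlag)

end

theorem gauss_sum_of_lagrangian_general
    {k : Type*} [Field k] [CharZero k]
    {G : Type*} [AddCommGroup G] [Finite G]
    (q : G → kˣ) (hq : IsQuadForm q)
    (H : AddSubgroup G)
    (hiso : ∀ h ∈ H, q h = 1)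
    (hlag : ∀ g : G, g ∈ H ↔ ∀ h ∈ H, bchar q g h = 1) :
    tauPlus q = (Nat.card H : k) ∧ tauMinus q = (Nat.card H : k) := by
  refine ⟨tauPlus_of_lagrangian hq hiso hlag, tauPlus_of_lagrangian hq.inv (by simpa) ?_⟩
  simpa [bchar_inv] using hlag

/-- If `H` is a Lagrangian subgroup of a pre-metric group `(G,q)`,
then `τ⁺(G,q) = |H|` and `τ⁻(G,q) = |H|` in `k`. -/
theorem gauss_sum_of_lagrangian
    {k : Type*} [Field k] [IsAlgClosed k] [CharZero k]
    {G : Type*} [AddCommGroup G] [Finite G]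
    (q : G → kˣ) (hq : IsQuadForm q)
    (H : AddSubgroup G)
    (hiso : ∀ h ∈ H, q h = 1)
    (hlag : ∀ g : G, g ∈ H ↔ ∀ h ∈ H, bchar q g h = 1) :
    tauPlus q = (Nat.card H : k) ∧ tauMinus q = (Nat.card H : k) :=
  gauss_sum_of_lagrangian_general q hq H hiso hlag
end

section
/- Let (G,q) be a metric group with |G| = 4 and let u ∈ G be an element of order 2 with q(u) = -1. Then the two elements of G ∖ {0,u} take the same value ξ under q, ξ is an 8-th root of unity in k, and τ⁺(G,q) = 2ξ. Moreover, if (G',q') is another metric group of order 4 with an element u' of order 2 satisfying q'(u') = -1 and whose two elements outside {0,u'} also take the value ξ under q', then there is an isomorphism of pre-metric groups (G,q) → (G',q') taking u to u'. -/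
/-! Choose `a ∉ {0, u}`, so that `G = {0, u, a, a + u}`. The character `b(u, ·)` squares to
`b(2u, ·) = 1` and is trivial on `u` (as `q(2u) = 1 = q(u)²`), so nondegeneracy forces
`b(u, a) = -1`; hence `q(a + u) = q(a) =: ξ` and `τ⁺ = 1 - 1 + 2ξ`. The identity
`q(g)⁴ · b(2g, g) = q(2g)²` gives `ξ⁴ = 1` when `2a = 0` and `ξ⁴ = -1` when `2a = u`. Thus `ξ`
decides whether `G ≅ ℤ/2 × ℤ/2` or `G ≅ ℤ/4`, and in both cases the group isomorphism sending
`(u, a)` to `(u', a')` preserves the forms. -/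

section QuadForm

variable {k : Type*} [Field k] {G : Type*} [AddCommGroup G] {q : G → kˣ}

lemma bchar_comm (q : G → kˣ) (g h : G) : bchar q g h = bchar q h g := by
  rw [bchar, bchar, add_comm, mul_right_comm]

lemma map_add_eq_mul_bchar (q : G → kˣ) (g h : G) : q (g + h) = q g * q h * bchar q g h := by
  rw [bchar]; ext; push_cast; field_simp

namespace IsQuadForm

lemma map_zero (hq : IsQuadForm q) : q 0 = 1 := by
  have h := hq.bchar_add_left 0 0 0
  rw [add_zero, left_eq_mul, bchar, add_zero, mul_inv_cancel, one_mul, inv_eq_one] at h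
  exact h

lemma bchar_zero_left (hq : IsQuadForm q) (h : G) : bchar q 0 h = 1 := by
  rw [bchar, zero_add, hq.map_zero]; group

lemma pow_four_mul_bchar (hq : IsQuadForm q) (g : G) :
    q g ^ 4 * bchar q (g + g) g = q (g + g) ^ 2 := by
  rw [hq.bchar_add_left, map_add_eq_mul_bchar q g g]
  ext; push_cast; ring

lemma pow_four_eq_one_of_add_self_eq_zero (hq : IsQuadForm q) {g : G} (hg : g + g = 0) :
    q g ^ 4 = 1 := by
  simpa [hg, hq.bchar_zero_left, hq.map_zero] using hq.pow_four_mul_bchar g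

lemma pow_four_eq_neg_one_of_add_self_eq (hq : IsQuadForm q) {g u : G} (hg : g + g = u)
    (hqu : q u = -1) (hb : bchar q u g = -1) : q g ^ 4 = -1 := by
  simpa [hg, hqu, hb, neg_eq_iff_eq_neg] using hq.pow_four_mul_bchar g

end IsQuadForm

lemma map_add_eq_iff_bchar_eq_neg_one {u a : G} (hqu : q u = -1) :
    q (a + u) = q a ↔ bchar q u a = -1 := by
  rw [map_add_eq_mul_bchar q, hqu, bchar_comm, mul_assoc, mul_eq_left, neg_one_mul,
    neg_eq_iff_eq_neg]

end QuadForm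

section Models

variable {G : Type*} [AddCommGroup G]

def zmodHomOfNsmul (n : ℕ) (x : G) (hx : n • x = 0) : ZMod n →+ G :=
  ZMod.lift n ⟨zmultiplesHom G x, by simpa using hx⟩

lemma zmodHomOfNsmul_natCast {n : ℕ} {x : G} (hx : n • x = 0) (m : ℕ) :
    zmodHomOfNsmul n x hx m = m • x := by
  unfold zmodHomOfNsmul
  simpa using ZMod.lift_coe n ⟨zmultiplesHom G x, by simpa using hx⟩ m

lemma zmodHomOfNsmul_one {n : ℕ} {x : G} (hx : n • x = 0) : zmodHomOfNsmul n x hx 1 = x := by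
  simpa using zmodHomOfNsmul_natCast hx 1

end Models

/-- `G = {0, u, a, a + u}` with `u` of order two. -/
structure IsOrderFourPair {G : Type*} [AddCommGroup G] (u a : G) : Prop where
  card_eq : Nat.card G = 4
  u_add_u : u + u = 0
  u_ne_zero : u ≠ 0
  a_ne_zero : a ≠ 0
  a_ne_u : a ≠ u

namespace IsOrderFourPair

variable {G G' M : Type*} [AddCommGroup G] [AddCommGroup G'] [AddCommGroup M]
  {u a : G} {u' a' : G'} {k : Type*} [Field k] {q : G → kˣ}

lemma exists_of_addOrderOf_eq_two (hcard : Nat.card G = 4) (hu : addOrderOf u = 2) :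
    ∃ a : G, IsOrderFourPair u a := by
  classical
  have := Nat.finite_of_card_ne_zero (α := G) (by omega)
  have : Fintype G := Fintype.ofFinite G
  have hlt : ({0, u} : Finset G).card < (Finset.univ : Finset G).card := by
    rw [Finset.card_univ, ← Nat.card_eq_fintype_card, hcard]
    exact Finset.card_le_two.trans_lt (by norm_num)
  obtain ⟨a, -, ha⟩ := Finset.exists_mem_notMem_of_card_lt_card hlt
  simp only [Finset.mem_insert, Finset.mem_singleton, not_or] at ha
  exact ⟨a, hcard, by simpa [two_nsmul, hu] using addOrderOf_nsmul_eq_zero u,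
    by rintro rfl; simp at hu, ha.1, ha.2⟩

lemma finite (h : IsOrderFourPair u a) : Finite G :=
  Nat.finite_of_card_ne_zero (by simp [h.card_eq])

lemma add_ne_zero (h : IsOrderFourPair u a) : a + u ≠ 0 := fun h0 =>
  h.a_ne_u ((eq_neg_of_add_eq_zero_left h0).trans (neg_eq_of_add_eq_zero_left h.u_add_u))

lemma add_ne_u (h : IsOrderFourPair u a) : a + u ≠ u := fun h' => h.a_ne_zero (add_eq_right.mp h')

lemma nodup (h : IsOrderFourPair u a) : [0, u, a, a + u].Nodup := by
  simp [h.u_ne_zero, h.a_ne_zero, h.u_ne_zero.symm, h.a_ne_zero.symm, h.a_ne_u.symm,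
    h.add_ne_zero.symm]

lemma toFinset_eq_univ [Fintype G] [DecidableEq G] (h : IsOrderFourPair u a) :
    [0, u, a, a + u].toFinset = Finset.univ := by
  refine Finset.eq_univ_of_card _ ?_
  rw [List.toFinset_card_of_nodup h.nodup, ← Nat.card_eq_fintype_card, h.card_eq]
  rfl

lemma eq_zero_or_eq_or_eq_or_eq_add (h : IsOrderFourPair u a) (x : G) :
    x = 0 ∨ x = u ∨ x = a ∨ x = a + u := by
  classical
  have := h.finite
  have : Fintype G := Fintype.ofFinite G
  simpa using h.toFinset_eq_univ.ge (Finset.mem_univ x)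

lemma finsum_eq_add_add_add {M : Type*} [AddCommMonoid M] (h : IsOrderFourPair u a)
    (f : G → M) : ∑ᶠ g, f g = f 0 + f u + f a + f (a + u) := by
  classical
  have := h.finite
  have : Fintype G := Fintype.ofFinite G
  rw [finsum_eq_sum_of_fintype, ← h.toFinset_eq_univ, List.sum_toFinset _ h.nodup]
  simp [add_assoc]

lemma add_self_eq_zero_or_eq (h : IsOrderFourPair u a) : a + a = 0 ∨ a + a = u := by
  rcases h.eq_zero_or_eq_or_eq_or_eq_add (a + a) with haa | haa | haa | haa
  · exact .inl haa
  · exact .inr haa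
  · exact absurd (add_eq_right.mp haa) h.a_ne_zero
  · exact absurd (add_left_cancel haa) h.a_ne_u

lemma bijective_of_mem_range [Finite M] (h : IsOrderFourPair u a) (hM : Nat.card M = 4)
    (f : M →+ G) (hu : u ∈ f.range) (ha : a ∈ f.range) : Function.Bijective f := by
  refine (Nat.bijective_iff_surjective_and_card f).mpr ⟨fun x => ?_, hM.trans h.card_eq.symm⟩
  rcases h.eq_zero_or_eq_or_eq_or_eq_add x with rfl | rfl | rfl | rfl
  exacts [⟨0, map_zero f⟩, hu, ha, add_mem ha hu]

lemma exists_addEquiv_of_addMonoidHom [Finite M] (h : IsOrderFourPair u a)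
    (h' : IsOrderFourPair u' a') (hM : Nat.card M = 4) (f : M →+ G) (f' : M →+ G') {m n : M}
    (hfm : f m = u) (hfn : f n = a) (hfm' : f' m = u') (hfn' : f' n = a') :
    ∃ φ : G ≃+ G', φ u = u' ∧ φ a = a' := by
  let e := AddEquiv.ofBijective f (h.bijective_of_mem_range hM f ⟨m, hfm⟩ ⟨n, hfn⟩)
  let e' := AddEquiv.ofBijective f' (h'.bijective_of_mem_range hM f' ⟨m, hfm'⟩ ⟨n, hfn'⟩)
  have hφ (x : M) : (e.symm.trans e') (f x) = f' x := by
    simp only [AddEquiv.trans_apply]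
    exact congrArg e' (e.symm_apply_apply x)
  exact ⟨e.symm.trans e', hfm ▸ hfm' ▸ hφ m, hfn ▸ hfn' ▸ hφ n⟩

lemma exists_addEquiv_of_add_self_eq_zero (h : IsOrderFourPair u a)
    (h' : IsOrderFourPair u' a') (haa : a + a = 0) (haa' : a' + a' = 0) :
    ∃ φ : G ≃+ G', φ u = u' ∧ φ a = a' := by
  have hu := h.u_add_u; have hu' := h'.u_add_u
  rw [← two_nsmul] at hu hu' haa haa'
  exact h.exists_addEquiv_of_addMonoidHom h' (M := ZMod 2 × ZMod 2) (by simp)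
    ((zmodHomOfNsmul 2 u hu).coprod (zmodHomOfNsmul 2 a haa))
    ((zmodHomOfNsmul 2 u' hu').coprod (zmodHomOfNsmul 2 a' haa')) (m := (1, 0)) (n := (0, 1))
    (by simp [zmodHomOfNsmul_one]) (by simp [zmodHomOfNsmul_one])
    (by simp [zmodHomOfNsmul_one]) (by simp [zmodHomOfNsmul_one])

lemma exists_addEquiv_of_add_self_eq (h : IsOrderFourPair u a)
    (h' : IsOrderFourPair u' a') (haa : a + a = u) (haa' : a' + a' = u') :
    ∃ φ : G ≃+ G', φ u = u' ∧ φ a = a' := by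
  have h4 : 4 • a = 0 := by rw [show 4 = 2 + 2 from rfl, add_nsmul, two_nsmul, haa, h.u_add_u]
  have h4' : 4 • a' = 0 := by
    rw [show 4 = 2 + 2 from rfl, add_nsmul, two_nsmul, haa', h'.u_add_u]
  exact h.exists_addEquiv_of_addMonoidHom h' (M := ZMod 4) (by simp)
    (zmodHomOfNsmul 4 a h4) (zmodHomOfNsmul 4 a' h4') (m := 2) (n := 1)
    (by simpa [two_nsmul, haa] using zmodHomOfNsmul_natCast h4 2) (zmodHomOfNsmul_one h4)
    (by simpa [two_nsmul, haa'] using zmodHomOfNsmul_natCast h4' 2) (zmodHomOfNsmul_one h4')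

lemma exists_addEquiv (h : IsOrderFourPair u a) (h' : IsOrderFourPair u' a')
    (hiff : a + a = 0 ↔ a' + a' = 0) : ∃ φ : G ≃+ G', φ u = u' ∧ φ a = a' := by
  rcases h.add_self_eq_zero_or_eq with haa | haa
  · exact h.exists_addEquiv_of_add_self_eq_zero h' haa (hiff.mp haa)
  · have haa' : a' + a' = u' := h'.add_self_eq_zero_or_eq.resolve_left fun h0 =>
      h.u_ne_zero (haa ▸ hiff.mpr h0)
    exact h.exists_addEquiv_of_add_self_eq h' haa haa'

lemma bchar_eq_neg_one (h : IsOrderFourPair u a) (hq : IsQuadForm q) (hnd : Nondeg q)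
    (hqu : q u = -1) : bchar q u a = -1 := by
  have hsq : (bchar q u a : k) ^ 2 = 1 := by
    rw [← Units.val_pow_eq_pow_val, sq, ← hq.bchar_add_left, h.u_add_u, hq.bchar_zero_left,
      Units.val_one]
  refine Units.ext ((sq_eq_one_iff.mp hsq).resolve_left fun h1 =>
    h.u_ne_zero (hnd (funext fun x => ?_)))
  have huu : bchar q u u = 1 := by rw [bchar, h.u_add_u, hq.map_zero, hqu]; simp
  have hua : bchar q u a = 1 := Units.ext h1
  change bchar q u x = bchar q 0 x
  rw [hq.bchar_zero_left]
  rcases h.eq_zero_or_eq_or_eq_or_eq_add x with rfl | rfl | rfl | rfl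
  · rw [bchar_comm, hq.bchar_zero_left]
  · exact huu
  · exact hua
  · rw [hq.bchar_add_right, hua, huu, one_mul]

lemma pow_eight_eq_one (h : IsOrderFourPair u a) (hq : IsQuadForm q) (hqu : q u = -1)
    (hb : bchar q u a = -1) : q a ^ 8 = 1 := by
  rw [show 8 = 4 * 2 from rfl, pow_mul]
  rcases h.add_self_eq_zero_or_eq with haa | haa
  · rw [hq.pow_four_eq_one_of_add_self_eq_zero haa, one_pow]
  · rw [hq.pow_four_eq_neg_one_of_add_self_eq haa hqu hb, neg_one_sq]

lemma pow_four_eq_one_iff [NeZero (2 : k)] (h : IsOrderFourPair u a) (hq : IsQuadForm q)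
    (hqu : q u = -1) (hb : bchar q u a = -1) : q a ^ 4 = 1 ↔ a + a = 0 := by
  rcases h.add_self_eq_zero_or_eq with haa | haa
  · exact iff_of_true (hq.pow_four_eq_one_of_add_self_eq_zero haa) haa
  · refine iff_of_false ?_ (haa ▸ h.u_ne_zero)
    rw [hq.pow_four_eq_neg_one_of_add_self_eq haa hqu hb, Units.ext_iff, Units.val_neg,
      Units.val_one]
    exact fun h1 => (two_ne_zero : (2 : k) ≠ 0) (by linear_combination -h1)

lemma exists_addEquiv_map_eq [NeZero (2 : k)] {q' : G' → kˣ} (h : IsOrderFourPair u a)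
    (h' : IsOrderFourPair u' a') (hq : IsQuadForm q) (hq' : IsQuadForm q') (hqu : q u = -1)
    (hqu' : q' u' = -1) (hb : bchar q u a = -1) (hb' : bchar q' u' a' = -1)
    (hqa : q' a' = q a) : ∃ φ : G ≃+ G', (∀ g, q' (φ g) = q g) ∧ φ u = u' := by
  have hiff : a + a = 0 ↔ a' + a' = 0 := by
    rw [← h.pow_four_eq_one_iff hq hqu hb, ← h'.pow_four_eq_one_iff hq' hqu' hb', hqa]
  obtain ⟨φ, hφu, hφa⟩ := h.exists_addEquiv h' hiff
  refine ⟨φ, fun g => ?_, hφu⟩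
  rcases h.eq_zero_or_eq_or_eq_or_eq_add g with rfl | rfl | rfl | rfl
  · rw [map_zero, hq.map_zero, hq'.map_zero]
  · rw [hφu, hqu, hqu']
  · rw [hφa, hqa]
  · rw [map_add, hφa, hφu, (map_add_eq_iff_bchar_eq_neg_one hqu').mpr hb',
      (map_add_eq_iff_bchar_eq_neg_one hqu).mpr hb, hqa]

end IsOrderFourPair

theorem order_four_metric_group_with_u_general
    {k : Type*} [Field k] [CharZero k]
    {G : Type*} [AddCommGroup G]
    (q : G → kˣ) (hq : IsQuadForm q) (hnd : Nondeg q)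
    (hcard : Nat.card G = 4)
    (u : G) (hu : addOrderOf u = 2) (hqu : q u = -1) :
    ∃ ξ : kˣ,
      (∀ g : G, g ≠ 0 → g ≠ u → q g = ξ) ∧
      ξ ^ 8 = 1 ∧
      tauPlus q = 2 * (ξ : k) ∧
      ∀ (G' : Type*) [AddCommGroup G'] [Finite G'] (q' : G' → kˣ) (u' : G'),
        IsQuadForm q' → Nondeg q' → Nat.card G' = 4 →
        addOrderOf u' = 2 → q' u' = -1 →
        (∀ g : G', g ≠ 0 → g ≠ u' → q' g = ξ) →
        ∃ φ : G ≃+ G', (∀ g : G, q' (φ g) = q g) ∧ φ u = u' := by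
  obtain ⟨a, h⟩ := IsOrderFourPair.exists_of_addOrderOf_eq_two hcard hu
  have hb := h.bchar_eq_neg_one hq hnd hqu
  have hqa : q (a + u) = q a := (map_add_eq_iff_bchar_eq_neg_one hqu).mpr hb
  refine ⟨q a, fun g hg0 hgu => ?_, h.pow_eight_eq_one hq hqu hb, ?_, ?_⟩
  · rcases h.eq_zero_or_eq_or_eq_or_eq_add g with rfl | rfl | rfl | rfl
    exacts [absurd rfl hg0, absurd rfl hgu, rfl, hqa]
  · rw [tauPlus, h.finsum_eq_add_add_add, hq.map_zero, hqu, hqa]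
    push_cast
    ring
  · intro G' _ _ q' u' hq' _ hcard' hu' hqu' hval'
    obtain ⟨a', h'⟩ := IsOrderFourPair.exists_of_addOrderOf_eq_two hcard' hu'
    have hqa' : q' a' = q a := hval' a' h'.a_ne_zero h'.a_ne_u
    have hb' : bchar q' u' a' = -1 := (map_add_eq_iff_bchar_eq_neg_one hqu').mp
      ((hval' _ h'.add_ne_zero h'.add_ne_u).trans hqa'.symm)
    exact h.exists_addEquiv_map_eq h' hq hq' hqu hqu' hb hb' hqa'

/-- Let `(G,q)` be a metric group of order `4` and `u ∈ G` of order `2`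
with `q(u) = -1`. Then the two elements of `G ∖ {0,u}` take a common value `ξ` under `q`,
`ξ⁸ = 1`, `τ⁺(G,q) = 2ξ`, and any other such triple `(G',q',u')` with the same value `ξ`
is isomorphic to `(G,q,u)`. -/
theorem order_four_metric_group_with_u
    {k : Type*} [Field k] [IsAlgClosed k] [CharZero k]
    {G : Type*} [AddCommGroup G] [Finite G]
    (q : G → kˣ) (hq : IsQuadForm q) (hnd : Nondeg q)
    (hcard : Nat.card G = 4)
    (u : G) (hu : addOrderOf u = 2) (hqu : q u = -1) :
    ∃ ξ : kˣ,
      (∀ g : G, g ≠ 0 → g ≠ u → q g = ξ) ∧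
      ξ ^ 8 = 1 ∧
      tauPlus q = 2 * (ξ : k) ∧
      ∀ (G' : Type*) [AddCommGroup G'] [Finite G'] (q' : G' → kˣ) (u' : G'),
        IsQuadForm q' → Nondeg q' → Nat.card G' = 4 →
        addOrderOf u' = 2 → q' u' = -1 →
        (∀ g : G', g ≠ 0 → g ≠ u' → q' g = ξ) →
        ∃ φ : G ≃+ G', (∀ g : G, q' (φ g) = q g) ∧ φ u = u' :=
  order_four_metric_group_with_u_general q hq hnd hcard u hu hqu
end
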